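/- In the digraph TT, if P is a directed path from a to a_i for some i in {1,2}, Q is a directed path from b_j to b for some j in {1,2}, and P and Q are arc-disjoint, then i = j. -/

import Mathlib

namespace TwoPairs

/-- Directed walks in a digraph given by its adjacency relation `A`. -/
inductive DWalk {V : Type*} (A : V → V → Prop) : V → V → Type _
  | nil (v : V) : DWalk A v v
  | cons {u v w : V} : A u v → DWalk A v w → DWalk A u w

variable {V : Type*} {A : V → V → Prop}

/-- The list of arcs of a directed walk. -/
def DWalk.arcs : {u v : V} → DWalk A u v → List (V × V)
  | _, _, .nil _ => []
  | u, _, .cons (v := m) _ q => (u, m) :: q.arcs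

/-- A directed path is a directed walk with pairwise distinct arcs. -/
def DWalk.IsTrail {u v : V} (P : DWalk A u v) : Prop := P.arcs.Nodup

/-- Two directed paths are arc-disjoint if they share no arc. -/
def ArcDisjoint {u v u' v' : V} (P : DWalk A u v) (Q : DWalk A u' v') : Prop :=
  ∀ e ∈ P.arcs, e ∉ Q.arcs

end TwoPairs

namespace TwoPairs

/-- The vertices of the digraph `TT`. -/
inductive VTT : Type
  | a | b | a1 | a2 | b1 | b2
  | T1 | T2 | T3 | T4 | T5 | T6 | T7 | T8 | T9 | T10
  deriving DecidableEq

open VTT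

/-- The arcs of the digraph `TT`. -/
def arcsTT : List (VTT × VTT) :=
  [(a,T2),(b1,T1),(b2,T3),(T2,T1),(T2,T7),(T1,T4),(T4,T3),(T4,T6),(T3,T5),
   (T3,a2),(T7,T6),(T6,T5),(T6,T10),(T5,T8),(T8,T9),(T8,a1),(T10,T9),(T9,b)]

/-- Adjacency relation of `TT`. -/
def AdjTT (x y : VTT) : Prop := (x, y) ∈ arcsTT

/-- `aTgt 0 = a1`, `aTgt 1 = a2`. -/
def aTgt : Fin 2 → VTT
  | 0 => a1 | 1 => a2

/-- `bSrc 0 = b1`, `bSrc 1 = b2`. -/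
def bSrc : Fin 2 → VTT
  | 0 => b1 | 1 => b2

/-! A walk leaving a vertex set `S` must use an arc leaving `S`. In `TT` the arc `T5 → T8` is the
only arc leaving `{T8, a1}ᶜ` and the only one leaving `{b2, T3, T5, a2}`, so every walk `a → a1`
and every walk `b2 → b` uses it; likewise `T1 → T4` is the only arc leaving `{T4, T3, a2, b2}ᶜ`
and the only one leaving `{b1, T1}`, so it lies on every walk `a → a2` and every walk `b1 → b`.
Hence when `i ≠ j` the two paths share an arc. -/

theorem DWalk.mem_arcs_of_only_exit {V : Type*} {A : V → V → Prop} {S : Set V} {e : V × V}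
    (hS : ∀ x y, A x y → x ∈ S → y ∉ S → (x, y) = e) :
    ∀ {u v : V} (w : DWalk A u v), u ∈ S → v ∉ S → e ∈ w.arcs
  | _, _, .nil _, hu, hv => absurd hu hv
  | u, _, .cons (v := m) h q, hu, hv => by
    by_cases hm : m ∈ S
    · exact List.mem_cons_of_mem _ (mem_arcs_of_only_exit hS q hm hv)
    · rw [← hS u m h hu hm]
      exact List.mem_cons_self

theorem mem_arcs_of_only_exit_TT {S : Set VTT} {e : VTT × VTT}
    (hS : ∀ p ∈ arcsTT, p.1 ∈ S → p.2 ∉ S → p = e) {u v : VTT} (w : DWalk AdjTT u v)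
    (hu : u ∈ S) (hv : v ∉ S) : e ∈ w.arcs :=
  w.mem_arcs_of_only_exit (fun x y hxy => hS (x, y) hxy) hu hv

theorem T5T8_mem_arcs_of_a_a1 (P : DWalk AdjTT a a1) : (T5, T8) ∈ P.arcs :=
  mem_arcs_of_only_exit_TT (S := {x | x ≠ T8 ∧ x ≠ a1}) (by decide) P (by decide) (by decide)

theorem T5T8_mem_arcs_of_b2_b (Q : DWalk AdjTT b2 b) : (T5, T8) ∈ Q.arcs :=
  mem_arcs_of_only_exit_TT (S := {x | x ∈ [b2, T3, T5, a2]}) (by decide) Q (by decide) (by decide)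

theorem T1T4_mem_arcs_of_a_a2 (P : DWalk AdjTT a a2) : (T1, T4) ∈ P.arcs :=
  mem_arcs_of_only_exit_TT (S := {x | x ∉ [T4, T3, a2, b2]}) (by decide) P (by decide) (by decide)

theorem T1T4_mem_arcs_of_b1_b (Q : DWalk AdjTT b1 b) : (T1, T4) ∈ Q.arcs :=
  mem_arcs_of_only_exit_TT (S := {x | x ∈ [b1, T1]}) (by decide) Q (by decide) (by decide)

theorem statement14_general (i j : Fin 2)
    (P : DWalk AdjTT VTT.a (aTgt i)) (Q : DWalk AdjTT (bSrc j) VTT.b)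
    (hPQ : ArcDisjoint P Q) : i = j := by
  fin_cases i <;> fin_cases j
  · rfl
  · exact (hPQ _ (T5T8_mem_arcs_of_a_a1 P) (T5T8_mem_arcs_of_b2_b Q)).elim
  · exact (hPQ _ (T1T4_mem_arcs_of_a_a2 P) (T1T4_mem_arcs_of_b1_b Q)).elim
  · rfl

/-- in the digraph `TT`, if `P` is a directed path from `a` to `a_i`,
`Q` is a directed path from `b_j` to `b`, and `P` and `Q` are arc-disjoint, then `i = j`. -/
theorem statement14 (i j : Fin 2)
    (P : DWalk AdjTT VTT.a (aTgt i)) (Q : DWalk AdjTT (bSrc j) VTT.b)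
    (hP : P.IsTrail) (hQ : Q.IsTrail) (hPQ : ArcDisjoint P Q) : i = j :=
  statement14_general i j P Q hPQ

end TwoPairs
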